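/- Let q > 1 and C : ℝⁿ → [0,∞) be a q-homogeneous, even, strictly convex function with C(x) = 0 iff x = 0. Let K = {x : C(x) ≤ 1} and let C* be the Legendre transform of C. Then the polar body K° = {x ∈ ℝⁿ : ⟨x,y⟩ ≤ 1 ∀ y ∈ K} satisfies K° = {x ∈ ℝⁿ : C*(x) ≤ ℓ_q}, where ℓ_q = q^{-p/q} p^{-1} and 1/p + 1/q = 1. -/

import Mathlib

open MeasureTheory Real
open scoped RealInnerProductSpace

noncomputable section

/-- The Legendre transform. -/
def legendre {n : ℕ} (C : EuclideanSpace ℝ (Fin n) → ℝ) (x : EuclideanSpace ℝ (Fin n)) : ℝ :=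
  ⨆ y : EuclideanSpace ℝ (Fin n), (⟪x, y⟫ - C y)

/-!
Writing `y = s • u` with `C u = 1` turns `⟪x, y⟫ - C y` into `s ⟪x, u⟫ - s ^ q`, and
`ℓ_q = max_{s ≥ 0} (s - s ^ q)`, attained at `s = q ^ (-p/q)`. So if `⟪x, u⟫ ≤ 1` on `K` then
`C*(x) ≤ ℓ_q`; conversely, if `⟪x, y⟫ > 1` for some `y ∈ K`, testing `C*` at `q ^ (-p/q) • y`
gives `C*(x) > ℓ_q`. For the supremum defining `C*` to be a genuine one, `C` grows like `‖·‖ ^ q`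
by compactness of the unit sphere, and Young's inequality bounds `⟪x, y⟫ - C y`.
-/

open Set

/-- `ℓ_q`, the sharp constant in `a * s - s ^ q ≤ ℓ_q * a ^ p`. -/
def youngConst (p q : ℝ) : ℝ := q ^ (-(p / q)) * p⁻¹

def IsPosHomogeneous {E : Type*} [SMul ℝ E] (q : ℝ) (C : E → ℝ) : Prop :=
  ∀ l : ℝ, 0 ≤ l → ∀ x, C (l • x) = l ^ q * C x

section Scalar

variable {p q : ℝ}

lemma youngConst_pos (hpq : p.HolderConjugate q) : 0 < youngConst p q :=
  mul_pos (rpow_pos_of_pos hpq.symm.pos _) (inv_pos.2 hpq.pos)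

lemma mul_sub_rpow_le_youngConst_mul (hpq : p.HolderConjugate q) {a s : ℝ} (ha : 0 ≤ a)
    (hs : 0 ≤ s) : a * s - s ^ q ≤ youngConst p q * a ^ p := by
  have hq : 0 < q := hpq.symm.pos
  set c := q ^ q⁻¹
  have hc : 0 < c := rpow_pos_of_pos hq _
  -- Young's inequality for the factors `a / c` and `c * s`, where `c ^ q = q`.
  have hyoung := young_inequality_of_nonneg (mul_nonneg ha (inv_nonneg.2 hc.le))
    (mul_nonneg hc.le hs) hpq
  have hprod : a * c⁻¹ * (c * s) = a * s := by field_simp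
  have hsq : (c * s) ^ q / q = s ^ q := by
    rw [mul_rpow hc.le hs, rpow_inv_rpow hq.le hq.ne']
    field_simp
  have hap : (a * c⁻¹) ^ p / p = youngConst p q * a ^ p := by
    rw [mul_rpow ha (inv_nonneg.2 hc.le), inv_rpow hc.le, ← rpow_mul hq.le, ← rpow_neg hq.le,
      youngConst, inv_mul_eq_div]
    ring
  linarith

lemma youngConst_eq_sub_rpow (hpq : p.HolderConjugate q) :
    youngConst p q = q ^ (-(p / q)) - (q ^ (-(p / q))) ^ q := by
  have hq : 0 < q := hpq.symm.pos
  have hpow : (q ^ (-(p / q))) ^ q = q ^ (-(p / q)) * q⁻¹ := by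
    rw [← rpow_mul hq.le, ← rpow_neg_one, ← rpow_add hq, hpq.div_conj_eq_sub_one]
    congr 1
    linarith [hpq.sub_one_mul_conj]
  rw [hpow, youngConst, ← hpq.symm.one_sub_inv]
  ring

end Scalar

section InnerProduct

variable {E : Type*} [NormedAddCommGroup E] [InnerProductSpace ℝ E] {p q : ℝ} {C : E → ℝ}

lemma IsPosHomogeneous.apply_zero (hC : IsPosHomogeneous q C) (hq : q ≠ 0) : C 0 = 0 := by
  simpa [zero_rpow hq] using hC 0 le_rfl 0

lemma IsPosHomogeneous.inner_le_rpow_of_forall_inner_le_one (hC : IsPosHomogeneous q C)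
    (hq : q ≠ 0) {x y : E} (hx : ∀ z, C z ≤ 1 → ⟪x, z⟫ ≤ 1) (hy : 0 < C y) :
    ⟪x, y⟫ ≤ C y ^ q⁻¹ := by
  set s := C y ^ q⁻¹
  have hs : 0 < s := rpow_pos_of_pos hy _
  have hCu : C (s⁻¹ • y) = 1 := by
    rw [hC _ (inv_nonneg.2 hs.le), inv_rpow hs.le, rpow_inv_rpow hy.le hq,
      inv_mul_cancel₀ hy.ne']
  have hxu := hx _ hCu.le
  rwa [real_inner_smul_right, inv_mul_le_iff₀ hs, mul_one] at hxu

lemma IsPosHomogeneous.inner_sub_le_youngConst (hC : IsPosHomogeneous q C)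
    (hpq : p.HolderConjugate q) (hpos : ∀ z, z ≠ 0 → 0 < C z) {x : E}
    (hx : ∀ z, C z ≤ 1 → ⟪x, z⟫ ≤ 1) (y : E) : ⟪x, y⟫ - C y ≤ youngConst p q := by
  have hq : q ≠ 0 := hpq.symm.ne_zero
  rcases eq_or_ne y 0 with rfl | hy
  · simpa [hC.apply_zero hq] using (youngConst_pos hpq).le
  have hCy := hpos y hy
  calc ⟪x, y⟫ - C y ≤ 1 * C y ^ q⁻¹ - (C y ^ q⁻¹) ^ q := by
        rw [one_mul, rpow_inv_rpow hCy.le hq]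
        gcongr
        exact hC.inner_le_rpow_of_forall_inner_le_one hq hx hCy
    _ ≤ youngConst p q * 1 ^ p :=
        mul_sub_rpow_le_youngConst_mul hpq zero_le_one (rpow_nonneg hCy.le _)
    _ = youngConst p q := by rw [one_rpow, mul_one]

lemma IsPosHomogeneous.inner_le_one_of_forall_inner_sub_le_youngConst
    (hC : IsPosHomogeneous q C) (hpq : p.HolderConjugate q) {x y : E}
    (hx : ∀ z, ⟪x, z⟫ - C z ≤ youngConst p q) (hy : C y ≤ 1) : ⟪x, y⟫ ≤ 1 := by
  set s := q ^ (-(p / q))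
  have hs : 0 < s := rpow_pos_of_pos hpq.symm.pos _
  have hxs := hx (s • y)
  rw [real_inner_smul_right, hC s hs.le, youngConst_eq_sub_rpow hpq] at hxs
  have hsy : s ^ q * C y ≤ s ^ q := mul_le_of_le_one_right (rpow_nonneg hs.le q) hy
  exact le_of_mul_le_mul_left (by linarith) hs

lemma IsPosHomogeneous.forall_inner_le_one_iff (hC : IsPosHomogeneous q C)
    (hpq : p.HolderConjugate q) (hpos : ∀ z, z ≠ 0 → 0 < C z) {x : E} :
    (∀ y, C y ≤ 1 → ⟪x, y⟫ ≤ 1) ↔ ∀ y, ⟪x, y⟫ - C y ≤ youngConst p q :=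
  ⟨hC.inner_sub_le_youngConst hpq hpos,
    fun hx _ ↦ hC.inner_le_one_of_forall_inner_sub_le_youngConst hpq hx⟩

lemma IsPosHomogeneous.exists_pos_mul_norm_rpow_le [FiniteDimensional ℝ E]
    (hC : IsPosHomogeneous q C) (hq : 0 < q) (hcont : Continuous C)
    (hpos : ∀ z, z ≠ 0 → 0 < C z) : ∃ m > 0, ∀ z, m * ‖z‖ ^ q ≤ C z := by
  obtain ⟨m, hm, hmC⟩ := (isCompact_sphere (0 : E) 1).exists_forall_le' hcont.continuousOn
    fun u hu ↦ hpos u (ne_zero_of_mem_unit_sphere ⟨u, hu⟩)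
  refine ⟨m, hm, fun z ↦ ?_⟩
  rcases eq_or_ne z 0 with rfl | hz
  · simp [zero_rpow hq.ne', hC.apply_zero hq.ne']
  have hz' : 0 < ‖z‖ := norm_pos_iff.2 hz
  have hu : ‖z‖⁻¹ • z ∈ Metric.sphere (0 : E) 1 := by
    simp [norm_smul, inv_mul_cancel₀ hz'.ne']
  calc m * ‖z‖ ^ q ≤ C (‖z‖⁻¹ • z) * ‖z‖ ^ q := by gcongr; exact hmC _ hu
    _ = C z := by rw [mul_comm, ← hC _ hz'.le, smul_inv_smul₀ hz'.ne']

lemma IsPosHomogeneous.bddAbove_range_inner_sub [FiniteDimensional ℝ E]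
    (hC : IsPosHomogeneous q C) (hq : 1 < q) (hcont : Continuous C)
    (hpos : ∀ z, z ≠ 0 → 0 < C z) (x : E) : BddAbove (range fun z ↦ ⟪x, z⟫ - C z) := by
  obtain ⟨m, hm, hmC⟩ := hC.exists_pos_mul_norm_rpow_le (by linarith) hcont hpos
  set c := m ^ q⁻¹
  have hc : 0 < c := rpow_pos_of_pos hm _
  refine ⟨youngConst (conjExponent q) q * (‖x‖ / c) ^ conjExponent q, ?_⟩
  rintro _ ⟨z, rfl⟩
  calc ⟪x, z⟫ - C z ≤ ‖x‖ / c * (c * ‖z‖) - (c * ‖z‖) ^ q := by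
        have hxz : ‖x‖ / c * (c * ‖z‖) = ‖x‖ * ‖z‖ := by field_simp
        rw [hxz, mul_rpow hc.le (norm_nonneg z), rpow_inv_rpow hm.le (by linarith)]
        linarith [real_inner_le_norm x z, hmC z]
    _ ≤ _ := mul_sub_rpow_le_youngConst_mul (HolderConjugate.conjExponent hq).symm
        (by positivity) (by positivity)

end InnerProduct

theorem polar_sublevel_eq_legendre_sublevel_general (n : ℕ) (p q : ℝ) (hq : 1 < q)
    (hpq : 1 / p + 1 / q = 1) (C : EuclideanSpace ℝ (Fin n) → ℝ)
    (hC0 : ∀ x, 0 ≤ C x)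
    (hconv : StrictConvexOn ℝ Set.univ C)
    (hhom : ∀ l : ℝ, 0 ≤ l → ∀ x, C (l • x) = l ^ q * C x)
    (hdef : ∀ x, C x = 0 ↔ x = 0) :
    {x : EuclideanSpace ℝ (Fin n) | ∀ y ∈ {z : EuclideanSpace ℝ (Fin n) | C z ≤ 1}, ⟪x, y⟫ ≤ 1} =
      {x : EuclideanSpace ℝ (Fin n) | legendre C x ≤ q ^ (-(p / q)) * p⁻¹} := by
  have hconj : p.HolderConjugate q := by
    have hq' : 1 / q < 1 := (div_lt_one (by linarith)).2 hq
    simpa using holderConjugate_one_div (by linarith) (by positivity) hpq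
  have hC : IsPosHomogeneous q C := hhom
  have hpos : ∀ z, z ≠ 0 → 0 < C z := fun z hz ↦ (hC0 z).lt_of_ne' (mt (hdef z).1 hz)
  have hcont : Continuous C := continuousOn_univ.mp (hconv.convexOn.continuousOn isOpen_univ)
  ext x
  exact (hC.forall_inner_le_one_iff hconj hpos).trans
    (ciSup_le_iff (hC.bddAbove_range_inner_sub hq hcont hpos x)).symm

/-- For a `q`-homogeneous, even, strictly convex `C` vanishing only at `0`, the polar body of
`K = {C ≤ 1}` is `{x : C*(x) ≤ ℓ_q}` where `ℓ_q = q^(-p/q) p⁻¹`. -/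
theorem polar_sublevel_eq_legendre_sublevel (n : ℕ) (p q : ℝ) (hq : 1 < q)
    (hpq : 1 / p + 1 / q = 1) (C : EuclideanSpace ℝ (Fin n) → ℝ)
    (hC0 : ∀ x, 0 ≤ C x) (heven : ∀ x, C (-x) = C x)
    (hconv : StrictConvexOn ℝ Set.univ C)
    (hhom : ∀ l : ℝ, 0 ≤ l → ∀ x, C (l • x) = l ^ q * C x)
    (hdef : ∀ x, C x = 0 ↔ x = 0) :
    {x : EuclideanSpace ℝ (Fin n) | ∀ y ∈ {z : EuclideanSpace ℝ (Fin n) | C z ≤ 1}, ⟪x, y⟫ ≤ 1} =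
      {x : EuclideanSpace ℝ (Fin n) | legendre C x ≤ q ^ (-(p / q)) * p⁻¹} :=
  polar_sublevel_eq_legendre_sublevel_general n p q hq hpq C hC0 hconv hhom hdef
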